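/- For any nonnegative integers v and e with e < v and any decomposition v = v'' + v''' into positive integers, there exists a forest (acyclic bipartite graph) with parts of sizes v'' and v''' having exactly e edges. -/

import Mathlib

def bipRel (v'' v''' e : ℕ) : (Fin v'' ⊕ Fin v''') → (Fin v'' ⊕ Fin v''') → Prop
  | Sum.inl a, Sum.inr b => (a.val = 0 ∧ b.val < e) ∨ (b.val = 0 ∧ 0 < a.val ∧ a.val + v''' ≤ e)
  | _, _ => False

theorem forest_with_given_parts_and_edges (v e v'' v''' : ℕ)
    (he : e < v) (h2 : 0 < v'') (h3 : 0 < v''') (hv : v'' + v''' = v) :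
    ∃ G : SimpleGraph (Fin v'' ⊕ Fin v'''),
      (∀ u w, G.Adj u w → u.isLeft ≠ w.isLeft) ∧
      G.IsAcyclic ∧
      G.edgeSet.ncard = e := by
  have hev : e < v'' + v''' := by omega
  set G : SimpleGraph (Fin v'' ⊕ Fin v''') := SimpleGraph.fromRel (bipRel v'' v''' e) with hG
  refine ⟨G, ?_, ?_, ?_⟩
  · -- bipartite
    rintro (a | a) (b | b) hab <;>
      simp only [hG, SimpleGraph.fromRel_adj, bipRel] at hab <;> simp_all
  · -- acyclic
    -- key: a vertex with nonzero index has at most one neighbor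
    have key : ∀ x y y' : Fin v'' ⊕ Fin v''',
        x ≠ Sum.inl ⟨0, h2⟩ → x ≠ Sum.inr ⟨0, h3⟩ → G.Adj x y → G.Adj x y' → y = y' := by
      rintro (a | a) (b | b) (c | c) hx1 hx2 h1 h2' <;>
        simp only [hG, SimpleGraph.fromRel_adj, bipRel] at h1 h2' <;>
        first
          | (exfalso; tauto)
          | (have ha : a.val ≠ 0 := by
               intro h0
               first
                 | exact hx1 (by congr 1; exact Fin.ext h0)
                 | exact hx2 (by congr 1; exact Fin.ext h0)
             obtain ⟨-, hb | hb⟩ := h1 <;> obtain ⟨-, hc | hc⟩ := h2' <;>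
               first
                 | (exfalso; tauto)
                 | (congr 1; exact Fin.ext (by omega))
                 | (congr 1; exact Fin.ext (by
                     rcases hb with hb | hb <;> rcases hc with hc | hc <;> omega)))
    intro u p hp
    have h3l : 3 ≤ p.length := hp.three_le_length
    -- find a non-center vertex on the cycle
    have : ∃ x ∈ p.support, x ≠ Sum.inl ⟨0, h2⟩ ∧ x ≠ Sum.inr ⟨0, h3⟩ := by
      by_contra hcon
      push_neg at hcon
      have hsub : p.support.tail.toFinset ⊆
          {(Sum.inl ⟨0, h2⟩ : Fin v'' ⊕ Fin v'''), Sum.inr ⟨0, h3⟩} := by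
        intro x hx
        have hx' := hcon x (List.mem_of_mem_tail (List.mem_toFinset.mp hx))
        simp only [Finset.mem_insert, Finset.mem_singleton]
        by_cases h : x = Sum.inl ⟨0, h2⟩
        · exact Or.inl h
        · exact Or.inr (hx' h)
      have hcard := Finset.card_le_card hsub
      rw [List.toFinset_card_of_nodup hp.support_nodup] at hcard
      have hlen : p.support.tail.length = p.length := by
        have := p.length_support
        simp [List.length_tail, this]
      have : (({Sum.inl ⟨0, h2⟩, Sum.inr ⟨0, h3⟩} : Finset (Fin v'' ⊕ Fin v''')).card) ≤ 2 :=
        Finset.card_insert_le _ _ |>.trans (by simp)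
      omega
    obtain ⟨x, hx, hx1, hx2⟩ := this
    -- rotate the cycle to start at x
    have hq : (p.rotate x hx).IsCycle := hp.rotate hx
    have hql : (p.rotate x hx).length = p.length := by
      have := SimpleGraph.Walk.rotate_darts p x hx
      calc (p.rotate x hx).length = (p.rotate x hx).darts.length := (SimpleGraph.Walk.length_darts _).symm
        _ = p.darts.length := this.perm.length_eq
        _ = p.length := SimpleGraph.Walk.length_darts _
    revert hq hql
    generalize p.rotate x hx = q
    intro hq hql
    cases q with
    | nil => simp at hql; omega
    | cons hxb r =>
      rename_i b
      have hrl : 1 ≤ r.length := by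
        simp [SimpleGraph.Walk.length_cons] at hql; omega
      have hbx : b ≠ x := by
        intro h; subst h; exact (G.irrefl) hxb
      -- get the last edge of r (first edge of r.reverse)
      have hxrne : x ≠ b := (G.ne_of_adj hxb)
      obtain ⟨d, had, r', hr'⟩ := SimpleGraph.Walk.exists_eq_cons_of_ne hxrne r.reverse
      have hdb : d = b := key x d b hx1 hx2 had hxb
      subst hdb
      have hmem : s(x, d) ∈ r.edges := by
        have : s(x, d) ∈ r.reverse.edges := by
          rw [hr', SimpleGraph.Walk.edges_cons]; exact List.mem_cons_self
        simpa [SimpleGraph.Walk.edges_reverse] using this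
      have hnodup := hq.edges_nodup
      rw [SimpleGraph.Walk.edges_cons, List.nodup_cons] at hnodup
      exact hnodup.1 hmem
  · -- edge count
    have hbound : ∀ i : Fin e, ¬ (i.val < v''') → i.val - v''' + 1 < v'' := by
      intro i h; have := i.isLt; omega
    set f : Fin e → Sym2 (Fin v'' ⊕ Fin v''') := fun i =>
      if h : i.val < v''' then s(Sum.inl ⟨0, h2⟩, Sum.inr ⟨i.val, h⟩)
      else s(Sum.inl ⟨i.val - v''' + 1, hbound i h⟩, Sum.inr ⟨0, h3⟩) with hf
    have hinj : Function.Injective f := by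
      intro i j hij
      simp only [hf] at hij
      split_ifs at hij with hi hj hj <;>
        simp only [Sym2.eq, Sym2.rel_iff', Prod.mk.injEq, Prod.swap_prod_mk,
          Sum.inl.injEq, Sum.inr.injEq, Fin.mk.injEq] at hij <;>
      · rcases hij with ⟨ha, hb⟩ | ⟨ha, hb⟩ <;>
          first
            | (exact Fin.ext (by omega))
            | (exact absurd ha (by simp))
            | (exact absurd hb (by simp))
            | (exfalso; exact Sum.inl_ne_inr ha)
            | (exfalso; exact Sum.inl_ne_inr hb)
            | (exfalso; omega)
    have hrange : Set.range f = G.edgeSet := by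
      ext s
      induction s with
      | _ a b =>
        simp only [SimpleGraph.mem_edgeSet, hG, SimpleGraph.fromRel_adj]
        constructor
        · rintro ⟨i, hi⟩
          simp only [hf] at hi
          split_ifs at hi with h <;>
            rcases Sym2.eq_iff.mp hi with ⟨rfl, rfl⟩ | ⟨rfl, rfl⟩
          · exact ⟨by simp, Or.inl (Or.inl ⟨rfl, i.isLt⟩)⟩
          · exact ⟨by simp, Or.inr (Or.inl ⟨rfl, i.isLt⟩)⟩
          · exact ⟨by simp, Or.inl (Or.inr ⟨rfl, by show 0 < ↑i - v''' + 1; omega,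
              by show ↑i - v''' + 1 + v''' ≤ e; have := i.isLt; omega⟩)⟩
          · exact ⟨by simp, Or.inr (Or.inr ⟨rfl, by show 0 < ↑i - v''' + 1; omega,
              by show ↑i - v''' + 1 + v''' ≤ e; have := i.isLt; omega⟩)⟩
        · rintro ⟨hne, hr | hr⟩
          · match a, b, hr with
            | Sum.inl a', Sum.inr b', hr =>
              rcases hr with ⟨ha0, hbe⟩ | ⟨hb0, ha1, hae⟩
              · refine ⟨⟨b'.val, hbe⟩, ?_⟩
                simp only [hf]
                rw [dif_pos b'.isLt]
                exact Sym2.eq_iff.mpr (Or.inl ⟨congrArg Sum.inl (Fin.ext ha0.symm),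
                  congrArg Sum.inr (Fin.ext rfl)⟩)
              · refine ⟨⟨a'.val + v''' - 1, by omega⟩, ?_⟩
                simp only [hf]
                rw [dif_neg (by show ¬ (a'.val + v''' - 1 < v'''); omega)]
                exact Sym2.eq_iff.mpr (Or.inl ⟨congrArg Sum.inl (Fin.ext
                  (by show a'.val + v''' - 1 - v''' + 1 = a'.val; omega)),
                  congrArg Sum.inr (Fin.ext hb0.symm)⟩)
          · match a, b, hr with
            | Sum.inr b', Sum.inl a', hr =>
              rcases hr with ⟨ha0, hbe⟩ | ⟨hb0, ha1, hae⟩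
              · refine ⟨⟨b'.val, hbe⟩, ?_⟩
                simp only [hf]
                rw [dif_pos b'.isLt]
                exact Sym2.eq_iff.mpr (Or.inr ⟨congrArg Sum.inl (Fin.ext ha0.symm),
                  congrArg Sum.inr (Fin.ext rfl)⟩)
              · refine ⟨⟨a'.val + v''' - 1, by omega⟩, ?_⟩
                simp only [hf]
                rw [dif_neg (by show ¬ (a'.val + v''' - 1 < v'''); omega)]
                exact Sym2.eq_iff.mpr (Or.inr ⟨congrArg Sum.inl (Fin.ext
                  (by show a'.val + v''' - 1 - v''' + 1 = a'.val; omega)),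
                  congrArg Sum.inr (Fin.ext hb0.symm)⟩)
    rw [← hrange, ← Set.image_univ, Set.ncard_image_of_injective _ hinj, Set.ncard_univ,
      Nat.card_eq_fintype_card, Fintype.card_fin]
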